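/- arXiv:1403.5022 — 3 statements merged into one kernel-verified Lean document; each statement's English description precedes it below -/
import Mathlib

section
/- Let f be a probability distribution on a finite type, and let g_θ(x) ∝ exp⟨θ, τ(x)⟩ be an exponential family with sufficient statistic τ : X → ℝ^d. If θ* is such that the expectation of τ under g_{θ*} equals the expectation of τ under f, then for every θ, the KL divergence D(f ‖ g_{θ*}) ≤ D(f ‖ g_θ). -/
/-!
Moment matching makes the cross term cancel: `log (g θ⋆ / g θ)` is an affine function of `τ`,
so its expectations under `f` and under `g θ⋆` agree. Hence
`D(f ‖ g θ) - D(f ‖ g θ⋆) = E_f [log (g θ⋆ / g θ)] = D(g θ⋆ ‖ g θ)`, which is nonnegative by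
Gibbs' inequality.
-/

open Real Finset

theorem sub_le_mul_log_div {p q : ℝ} (hp : 0 ≤ p) (hq : 0 < q) : p - q ≤ p * log (p / q) := by
  rcases hp.eq_or_lt with rfl | hp
  · simpa using hq.le
  have h := one_sub_inv_le_log_of_pos (div_pos hp hq)
  rw [inv_div] at h
  calc p - q = p * (1 - q / p) := by field_simp
    _ ≤ p * log (p / q) := by gcongr

theorem sum_mul_log_div_nonneg {X : Type*} [Fintype X] {p q : X → ℝ} (hp : ∀ x, 0 ≤ p x)
    (hq : ∀ x, 0 < q x) (hpq : ∑ x, p x = ∑ x, q x) : 0 ≤ ∑ x, p x * log (p x / q x) :=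
  calc (0 : ℝ) = ∑ x, (p x - q x) := by rw [sum_sub_distrib, hpq, sub_self]
    _ ≤ ∑ x, p x * log (p x / q x) := sum_le_sum fun x _ => sub_le_mul_log_div (hp x) (hq x)

theorem mul_log_div_sub_mul_log_div {a b : ℝ} (c : ℝ) (ha : 0 < a) (hb : 0 < b) :
    c * log (c / b) - c * log (c / a) = c * log (a / b) := by
  rcases eq_or_ne c 0 with rfl | hc
  · simp
  rw [log_div hc hb.ne', log_div hc ha.ne', log_div ha.ne' hb.ne']
  ring

theorem sum_mul_affine_eq_of_moments_eq {X ι : Type*} [Fintype X] [Fintype ι]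
    (τ : X → ι → ℝ) {p q : X → ℝ} (hmass : ∑ x, p x = ∑ x, q x)
    (hmom : ∀ i, ∑ x, p x * τ x i = ∑ x, q x * τ x i) (a : ι → ℝ) (c : ℝ) :
    ∑ x, p x * (∑ i, a i * τ x i + c) = ∑ x, q x * (∑ i, a i * τ x i + c) := by
  have expand : ∀ r : X → ℝ, ∑ x, r x * (∑ i, a i * τ x i + c)
      = ∑ i, a i * ∑ x, r x * τ x i + (∑ x, r x) * c := by
    intro r
    simp only [mul_add, sum_add_distrib, sum_mul, mul_sum]
    rw [sum_comm]
    congr 1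
    exact sum_congr rfl fun _ _ => sum_congr rfl fun _ _ => by ring
  simp only [expand, hmass, hmom]

section ExponentialFamily

variable {X ι : Type*} [Fintype X] [Fintype ι] (τ : X → ι → ℝ)

noncomputable def partitionFn (θ : ι → ℝ) : ℝ := ∑ x, exp (∑ i, θ i * τ x i)

noncomputable def expFamily (θ : ι → ℝ) (x : X) : ℝ := exp (∑ i, θ i * τ x i) / partitionFn τ θ

variable [Nonempty X]

theorem partitionFn_pos (θ : ι → ℝ) : 0 < partitionFn τ θ :=
  sum_pos (fun _ _ => exp_pos _) univ_nonempty

theorem expFamily_pos (θ : ι → ℝ) (x : X) : 0 < expFamily τ θ x :=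
  div_pos (exp_pos _) (partitionFn_pos τ θ)

theorem sum_expFamily (θ : ι → ℝ) : ∑ x, expFamily τ θ x = 1 := by
  simp only [expFamily]
  rw [← sum_div, ← partitionFn, div_self (partitionFn_pos τ θ).ne']

theorem log_expFamily_div (θ θ' : ι → ℝ) (x : X) :
    log (expFamily τ θ x / expFamily τ θ' x)
      = ∑ i, (θ i - θ' i) * τ x i + (log (partitionFn τ θ') - log (partitionFn τ θ)) := by
  rw [log_div (expFamily_pos τ θ x).ne' (expFamily_pos τ θ' x).ne', expFamily, expFamily,
    log_div (exp_pos _).ne' (partitionFn_pos τ θ).ne',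
    log_div (exp_pos _).ne' (partitionFn_pos τ θ').ne', log_exp, log_exp]
  simp only [sub_mul, sum_sub_distrib]
  ring

end ExponentialFamily

theorem expFamily_momentMatch_minimizes_KL_general {X : Type*} [Fintype X] {d : ℕ}
    (f : X → ℝ) (hf1 : ∑ x, f x = 1)
    (τ : X → Fin d → ℝ)
    (g : (Fin d → ℝ) → X → ℝ)
    (hg : ∀ θ x, g θ x = Real.exp (∑ i, θ i * τ x i) /
      (∑ x', Real.exp (∑ i, θ i * τ x' i)))
    (θstar : Fin d → ℝ)
    (hmatch : ∀ i, ∑ x, g θstar x * τ x i = ∑ x, f x * τ x i) :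
    ∀ θ : Fin d → ℝ,
      ∑ x, f x * Real.log (f x / g θstar x) ≤
        ∑ x, f x * Real.log (f x / g θ x) := by
  intro θ
  obtain rfl : g = expFamily τ := funext fun θ => funext (hg θ)
  have : Nonempty X := by
    by_contra hX
    simp [not_nonempty_iff.mp hX] at hf1
  have hmass : ∑ x, f x = ∑ x, expFamily τ θstar x := by rw [hf1, sum_expFamily]
  have hdiff : ∑ x, f x * log (f x / expFamily τ θ x)
      - ∑ x, f x * log (f x / expFamily τ θstar x)
      = ∑ x, expFamily τ θstar x * log (expFamily τ θstar x / expFamily τ θ x) := by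
    simp only [← sum_sub_distrib,
      mul_log_div_sub_mul_log_div _ (expFamily_pos τ _ _) (expFamily_pos τ _ _),
      log_expFamily_div]
    exact sum_mul_affine_eq_of_moments_eq τ hmass (fun i => (hmatch i).symm) _ _
  have hgibbs := sum_mul_log_div_nonneg (fun x => (expFamily_pos τ θstar x).le)
    (expFamily_pos τ θ) (by rw [sum_expFamily, sum_expFamily])
  linarith

/-- Exponential-family moment matching minimises KL divergence:
if the expectation of the sufficient statistic `τ` under `g θ⋆` matches its
expectation under `f`, then `D(f ‖ g θ⋆) ≤ D(f ‖ g θ)` for every `θ`. -/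
theorem expFamily_momentMatch_minimizes_KL {X : Type*} [Fintype X] {d : ℕ}
    (f : X → ℝ) (hf0 : ∀ x, 0 ≤ f x) (hf1 : ∑ x, f x = 1)
    (τ : X → Fin d → ℝ)
    (g : (Fin d → ℝ) → X → ℝ)
    (hg : ∀ θ x, g θ x = Real.exp (∑ i, θ i * τ x i) /
      (∑ x', Real.exp (∑ i, θ i * τ x' i)))
    (θstar : Fin d → ℝ)
    (hmatch : ∀ i, ∑ x, g θstar x * τ x i = ∑ x, f x * τ x i) :
    ∀ θ : Fin d → ℝ,
      ∑ x, f x * Real.log (f x / g θstar x) ≤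
        ∑ x, f x * Real.log (f x / g θ x) :=
  expFamily_momentMatch_minimizes_KL_general f hf1 τ g hg θstar hmatch
end

section
/- (Convolution formula for set integrals, discrete case.) Let S be a finite type, and let f₁, f₂, v be functions on finite multisets over S. Then ∑_{n≥0} (1/n!) ∑_{x₁,…,xₙ ∈ S} [∑_{I ⊆ {1,…,n}} f₁({xᵢ : i ∈ I}) f₂({xᵢ : i ∉ I})] v({x₁,…,xₙ}) = ∑_{m,k ≥ 0} (1/(m! k!)) ∑_{x₁,…,x_{m+k}} f₁({x₁,…,x_m}) f₂({x_{m+1},…,x_{m+k}}) v({x₁,…,x_{m+k}}), provided both sides converge absolutely. -/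
/-!
Expand the convolution and exchange the sums over `x` and `I`. Relabelling `Fin n` so that the
elements of `I` come first turns the contribution of a subset `I` with `#I = m`, `#Iᶜ = k` into the
`(m, k)` term of the double integral; there are `n.choose m` such subsets and
`(n.choose m) / n! = 1 / (m! k!)`. The double series is absolutely convergent, so it can be summed
along the antidiagonals `m + k = n`.
-/

open Finset

theorem Multiset.map_univ_val_orderEmbOfFin {α β : Type*} [LinearOrder α] (s : Finset α)
    {k : ℕ} (h : #s = k) (x : α → β) :
    (univ.val : Multiset (Fin k)).map (x ∘ s.orderEmbOfFin h) = s.val.map x := by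
  conv_rhs => rw [← s.map_orderEmbOfFin_univ h, Finset.map_val, Multiset.map_map]
  rfl

theorem Summable.tsum_eq_tsum_sum_antidiagonal {α A : Type*} [AddCommMonoid α]
    [TopologicalSpace α] [T3Space α] [ContinuousAdd α] [AddCommMonoid A] [HasAntidiagonal A]
    {f : A × A → α} (hf : Summable f) :
    ∑' p, f p = ∑' n, ∑ p ∈ antidiagonal n, f p := by
  let e := HasAntidiagonal.sigmaAntidiagonalEquivProd (A := A)
  rw [← e.tsum_eq]
  refine ((e.summable_iff.mpr hf).tsum_sigma' fun _ => (hasSum_fintype _).summable).trans ?_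
  exact tsum_congr fun n => by simp [tsum_fintype, e, sum_attach]

section SplitSum

variable {S : Type*} [Fintype S] (f₁ f₂ v : Multiset S → ℝ)

noncomputable def splitSum (m k : ℕ) : ℝ :=
  ∑ x : Fin (m + k) → S,
    f₁ (Multiset.map (fun i : Fin m => x (Fin.castAdd k i)) univ.val) *
    f₂ (Multiset.map (fun i : Fin k => x (Fin.natAdd m i)) univ.val) *
    v (Multiset.map x univ.val)

theorem sum_map_mul_map_compl_eq_splitSum {α : Type*} [Fintype α] [LinearOrder α]
    (I : Finset α) {m k : ℕ} (hm : #I = m) (hk : #Iᶜ = k) :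
    ∑ x : α → S, f₁ (I.val.map x) * f₂ (Iᶜ.val.map x) * v (univ.val.map x) =
      splitSum f₁ f₂ v m k := by
  let σ : Fin (m + k) ≃ α := finSumFinEquiv.symm.trans (finSumEquivOfFinset hm hk)
  refine Fintype.sum_equiv (σ.arrowCongr (Equiv.refl S)).symm _ _ fun x => ?_
  have hI : (univ.val : Multiset (Fin m)).map (x ∘ σ ∘ Fin.castAdd k) = I.val.map x := by
    rw [← Multiset.map_univ_val_orderEmbOfFin I hm]
    congr 1; ext i; simp [σ]
  have hIc : (univ.val : Multiset (Fin k)).map (x ∘ σ ∘ Fin.natAdd m) = Iᶜ.val.map x := by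
    rw [← Multiset.map_univ_val_orderEmbOfFin Iᶜ hk]
    congr 1; ext i; simp [σ]
  have huniv : (univ.val : Multiset (Fin (m + k))).map (x ∘ σ) = univ.val.map x := by
    rw [← Multiset.map_map, Multiset.map_univ_val_equiv]
  rw [← hI, ← hIc, ← huniv]
  rfl

theorem sum_convolution_mul_eq_sum_antidiagonal (n : ℕ) :
    ∑ x : Fin n → S, (∑ I : Finset (Fin n), f₁ (I.val.map x) * f₂ (Iᶜ.val.map x)) *
        v (univ.val.map x) =
      ∑ p ∈ antidiagonal n, (n.choose p.1 : ℝ) * splitSum f₁ f₂ v p.1 p.2 := by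
  simp_rw [sum_mul]
  rw [sum_comm]
  calc ∑ I : Finset (Fin n), ∑ x : Fin n → S,
          f₁ (I.val.map x) * f₂ (Iᶜ.val.map x) * v (univ.val.map x)
      = ∑ I : Finset (Fin n), splitSum f₁ f₂ v #I (n - #I) :=
        sum_congr rfl fun I _ =>
          sum_map_mul_map_compl_eq_splitSum f₁ f₂ v I rfl (by simp [card_compl])
    _ = ∑ m ∈ range (n + 1), n.choose m • splitSum f₁ f₂ v m (n - m) := by
        rw [← powerset_univ, sum_powerset_apply_card fun m => splitSum f₁ f₂ v m (n - m),
          card_univ, Fintype.card_fin]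
    _ = _ := by rw [Nat.sum_antidiagonal_eq_sum_range_succ_mk]; simp_rw [nsmul_eq_mul]

theorem inv_factorial_mul_sum_convolution_mul (n : ℕ) :
    (n.factorial : ℝ)⁻¹ * ∑ x : Fin n → S,
        (∑ I : Finset (Fin n), f₁ (I.val.map x) * f₂ (Iᶜ.val.map x)) * v (univ.val.map x) =
      ∑ p ∈ antidiagonal n,
        ((p.1.factorial : ℝ) * (p.2.factorial : ℝ))⁻¹ * splitSum f₁ f₂ v p.1 p.2 := by
  rw [sum_convolution_mul_eq_sum_antidiagonal, mul_sum]
  refine sum_congr rfl fun ⟨m, k⟩ hmk => ?_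
  obtain rfl : m + k = n := mem_antidiagonal.mp hmk
  rw [Nat.cast_add_choose]
  field_simp

end SplitSum

theorem setIntegral_convolution_general {S : Type*} [Fintype S]
    (f₁ f₂ v : Multiset S → ℝ)
    (hR : Summable fun mk : ℕ × ℕ =>
      |(((mk.1.factorial : ℝ) * (mk.2.factorial : ℝ))⁻¹ *
        ∑ x : Fin (mk.1 + mk.2) → S,
          f₁ (Multiset.map (fun i : Fin mk.1 => x (Fin.castAdd mk.2 i))
              Finset.univ.val) *
          f₂ (Multiset.map (fun i : Fin mk.2 => x (Fin.natAdd mk.1 i))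
              Finset.univ.val) *
          v (Multiset.map x Finset.univ.val))|) :
    (∑' n : ℕ, (n.factorial : ℝ)⁻¹ * ∑ x : Fin n → S, (∑ I : Finset (Fin n),
        f₁ (Multiset.map x I.val) * f₂ (Multiset.map x Iᶜ.val)) *
        v (Multiset.map x Finset.univ.val)) =
      ∑' mk : ℕ × ℕ, ((mk.1.factorial : ℝ) * (mk.2.factorial : ℝ))⁻¹ *
        ∑ x : Fin (mk.1 + mk.2) → S,
          f₁ (Multiset.map (fun i : Fin mk.1 => x (Fin.castAdd mk.2 i))
              Finset.univ.val) *
          f₂ (Multiset.map (fun i : Fin mk.2 => x (Fin.natAdd mk.1 i))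
              Finset.univ.val) *
          v (Multiset.map x Finset.univ.val) := by
  have hsum : Summable fun mk : ℕ × ℕ =>
      ((mk.1.factorial : ℝ) * (mk.2.factorial : ℝ))⁻¹ * splitSum f₁ f₂ v mk.1 mk.2 :=
    summable_abs_iff.mp hR
  exact (tsum_congr (inv_factorial_mul_sum_convolution_mul f₁ f₂ v)).trans
    hsum.tsum_eq_tsum_sum_antidiagonal.symm

/-- Convolution formula for set integrals (discrete case): the set integral of
`(f₁ ⋆ f₂)(X) = ∑_{Y ⊆ X} f₁(Y) f₂(X − Y)` against `v` equals the double set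
integral of `f₁(X₁) f₂(X₂) v(X₁ ∪ X₂)`, provided both sides converge
absolutely. Multisets over the finite type `S` encode unordered finite sets. -/
theorem setIntegral_convolution {S : Type*} [Fintype S] [DecidableEq S]
    (f₁ f₂ v : Multiset S → ℝ)
    (hL : Summable fun n : ℕ =>
      |((n.factorial : ℝ)⁻¹ * ∑ x : Fin n → S, (∑ I : Finset (Fin n),
        f₁ (Multiset.map x I.val) * f₂ (Multiset.map x Iᶜ.val)) *
        v (Multiset.map x Finset.univ.val))|)
    (hR : Summable fun mk : ℕ × ℕ =>
      |(((mk.1.factorial : ℝ) * (mk.2.factorial : ℝ))⁻¹ *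
        ∑ x : Fin (mk.1 + mk.2) → S,
          f₁ (Multiset.map (fun i : Fin mk.1 => x (Fin.castAdd mk.2 i))
              Finset.univ.val) *
          f₂ (Multiset.map (fun i : Fin mk.2 => x (Fin.natAdd mk.1 i))
              Finset.univ.val) *
          v (Multiset.map x Finset.univ.val))|) :
    (∑' n : ℕ, (n.factorial : ℝ)⁻¹ * ∑ x : Fin n → S, (∑ I : Finset (Fin n),
        f₁ (Multiset.map x I.val) * f₂ (Multiset.map x Iᶜ.val)) *
        v (Multiset.map x Finset.univ.val)) =
      ∑' mk : ℕ × ℕ, ((mk.1.factorial : ℝ) * (mk.2.factorial : ℝ))⁻¹ *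
        ∑ x : Fin (mk.1 + mk.2) → S,
          f₁ (Multiset.map (fun i : Fin mk.1 => x (Fin.castAdd mk.2 i))
              Finset.univ.val) *
          f₂ (Multiset.map (fun i : Fin mk.2 => x (Fin.natAdd mk.1 i))
              Finset.univ.val) *
          v (Multiset.map x Finset.univ.val) :=
  setIntegral_convolution_general f₁ f₂ v hR
end

section
/- (KLSJPDA inner minimization.) Let f be a probability density on (ℝ^d)^n and g an everywhere-positive probability density on (ℝ^d)^n. Over all densities f̃ satisfying the symmetrization constraint ∑_π f̃(πX) = ∑_π f(πX) for all X, the KL divergence ∫ f̃(X) log(f̃(X)/g(X)) dX is minimized by f̃(X) = [g(X)/∑_π g(πX)] · ∑_π f(πX), and the minimum value equals (1/n!) ∫ [∑_π f(πX)] log(∑_π f(πX) / ∑_π g(πX)) dX. -/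
/-!
Lebesgue measure on `(ℝ^d)^n` is invariant under permuting the blocks, so integrating the
symmetrization `∑_π φ(πX)` of an integrand gives `n!` times its integral, and it suffices to compare
symmetrized integrands pointwise. With `F = ∑_π f(πX)` and `G = ∑_π g(πX)`, the log-sum inequality
bounds the symmetrization of `f̃ log (f̃ / g)` below by `F log (F / G)` for every admissible `f̃`;
for `f̃⋆` the ratio `f̃⋆ / g = F / G` is permutation invariant, and equality holds.
-/

open MeasureTheory

theorem Real.mul_log_sum_div_sum_le {ι : Type*} (s : Finset ι) {a w : ι → ℝ}
    (ha : ∀ i ∈ s, 0 ≤ a i) (hw : ∀ i ∈ s, 0 < w i) :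
    (∑ i ∈ s, a i) * Real.log ((∑ i ∈ s, a i) / ∑ i ∈ s, w i) ≤
      ∑ i ∈ s, a i * Real.log (a i / w i) := by
  rcases s.eq_empty_or_nonempty with rfl | hs
  · simp
  set W := ∑ i ∈ s, w i
  have hW : 0 < W := Finset.sum_pos hw hs
  have weighted_sum (c : ι → ℝ) :
      ∑ i ∈ s, w i / W * (a i / w i * c i) = (∑ i ∈ s, a i * c i) / W := by
    rw [Finset.sum_div]
    exact Finset.sum_congr rfl fun i hi => by field_simp [(hw i hi).ne']
  -- Jensen for `x ↦ x log x` at the points `a i / w i`, with weights `w i / W`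
  have jensen := Real.convexOn_mul_log.map_sum_le (t := s) (w := fun i => w i / W)
    (p := fun i => a i / w i) (fun i hi => (div_pos (hw i hi) hW).le)
    (by rw [← Finset.sum_div, div_self hW.ne'])
    (fun i hi => Set.mem_Ici.2 (div_nonneg (ha i hi) (hw i hi).le))
  have mean := weighted_sum 1
  simp only [Pi.one_apply, mul_one] at mean
  simp only [smul_eq_mul, mean, weighted_sum] at jensen
  rwa [div_mul_eq_mul_div, div_le_div_iff_of_pos_right hW] at jensen

section PermInvariance

variable {ι α : Type*} [Fintype ι] [MeasurableSpace α] (μ : Measure α) [SigmaFinite μ]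

theorem measurePreserving_comp_perm (σ : Equiv.Perm ι) :
    MeasurePreserving (fun X : ι → α => X ∘ σ) (Measure.pi fun _ => μ) (Measure.pi fun _ => μ) :=
  measurePreserving_arrowCongr' (fun _ => μ) (fun _ => μ) σ.symm (MeasurableEquiv.refl α)
    fun _ => MeasurePreserving.id μ

theorem integral_comp_perm (σ : Equiv.Perm ι) (φ : (ι → α) → ℝ) :
    ∫ X, φ (X ∘ σ) ∂(Measure.pi fun _ => μ) = ∫ X, φ X ∂(Measure.pi fun _ => μ) :=
  (measurePreserving_comp_perm μ σ).integral_comp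
    (MeasurableEquiv.arrowCongr' σ.symm (MeasurableEquiv.refl α)).measurableEmbedding φ

end PermInvariance

section Symmetrize

variable {ι α : Type*} [Fintype ι] [DecidableEq ι]

def symmetrize (φ : (ι → α) → ℝ) (X : ι → α) : ℝ :=
  ∑ π : Equiv.Perm ι, φ (X ∘ π)

theorem symmetrize_comp_perm (φ : (ι → α) → ℝ) (X : ι → α) (σ : Equiv.Perm ι) :
    symmetrize φ (X ∘ σ) = symmetrize φ X :=
  Fintype.sum_equiv (Equiv.mulLeft σ) _ _ fun _ => rfl

theorem symmetrize_mul_of_comp_perm (φ r : (ι → α) → ℝ)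
    (hr : ∀ X (σ : Equiv.Perm ι), r (X ∘ σ) = r X) (X : ι → α) :
    symmetrize (fun Y => φ Y * r Y) X = symmetrize φ X * r X := by
  simp only [symmetrize, hr, Finset.sum_mul]

theorem symmetrize_pos {φ : (ι → α) → ℝ} (hφ : ∀ X, 0 < φ X) (X : ι → α) :
    0 < symmetrize φ X :=
  Finset.sum_pos (fun _ _ => hφ _) Finset.univ_nonempty

theorem mul_log_symmetrize_le {f g : (ι → α) → ℝ} (hf : ∀ X, 0 ≤ f X) (hg : ∀ X, 0 < g X)
    (X : ι → α) :
    symmetrize f X * Real.log (symmetrize f X / symmetrize g X) ≤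
      symmetrize (fun Y => f Y * Real.log (f Y / g Y)) X :=
  Real.mul_log_sum_div_sum_le _ (fun _ _ => hf _) fun _ _ => hg _

/-- The minimizer `f̃⋆` of the theorem: the I-projection of `g` onto the densities whose
symmetrization is that of `f`. -/
noncomputable def iProjection (f g : (ι → α) → ℝ) (X : ι → α) : ℝ :=
  g X / symmetrize g X * symmetrize f X

theorem iProjection_div {f g : (ι → α) → ℝ} (hg : ∀ X, 0 < g X) (X : ι → α) :
    iProjection f g X / g X = symmetrize f X / symmetrize g X := by
  rw [iProjection]
  field_simp [(hg X).ne']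

theorem symmetrize_mul_log_iProjection {f g : (ι → α) → ℝ} (hg : ∀ X, 0 < g X) (X : ι → α) :
    symmetrize (fun Y => iProjection f g Y * Real.log (iProjection f g Y / g Y)) X =
      symmetrize f X * Real.log (symmetrize f X / symmetrize g X) := by
  set r := fun Y => symmetrize f Y / symmetrize g Y * Real.log (symmetrize f Y / symmetrize g Y)
  have hr : ∀ Y (σ : Equiv.Perm ι), r (Y ∘ σ) = r Y := by
    intro Y σ
    simp only [r, symmetrize_comp_perm]
  have hterm : (fun Y => iProjection f g Y * Real.log (iProjection f g Y / g Y)) =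
      fun Y => g Y * r Y := by
    funext Y
    rw [iProjection_div hg, iProjection]
    ring
  rw [hterm, symmetrize_mul_of_comp_perm g r hr, ← mul_assoc,
    mul_div_cancel₀ _ (symmetrize_pos hg X).ne']

variable [MeasurableSpace α] (μ : Measure α) [SigmaFinite μ]

theorem integrable_symmetrize {φ : (ι → α) → ℝ} (hφ : Integrable φ (Measure.pi fun _ => μ)) :
    Integrable (symmetrize φ) (Measure.pi fun _ => μ) :=
  integrable_finsetSum _ fun σ _ =>
    (measurePreserving_comp_perm μ σ).integrable_comp_of_integrable hφ

theorem integral_symmetrize {φ : (ι → α) → ℝ} (hφ : Integrable φ (Measure.pi fun _ => μ)) :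
    ∫ X, symmetrize φ X ∂(Measure.pi fun _ => μ) =
      (Fintype.card ι).factorial * ∫ X, φ X ∂(Measure.pi fun _ => μ) := by
  unfold symmetrize
  rw [integral_finsetSum (f := fun (σ : Equiv.Perm ι) (X : ι → α) => φ (X ∘ σ)) _ fun σ _ =>
    (measurePreserving_comp_perm μ σ).integrable_comp_of_integrable hφ]
  simp [integral_comp_perm, Fintype.card_perm]

end Symmetrize

theorem klsjpda_inner_minimization_general {d n : ℕ}
    (f g : (Fin n → Fin d → ℝ) → ℝ)
    (hg : ∀ X, 0 < g X)
    (fstar : (Fin n → Fin d → ℝ) → ℝ)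
    (hfstar : ∀ X, fstar X =
      (g X / ∑ π : Equiv.Perm (Fin n), g (X ∘ π)) *
        ∑ π : Equiv.Perm (Fin n), f (X ∘ π))
    (hstar_int : Integrable (fun X : Fin n → Fin d → ℝ =>
      fstar X * Real.log (fstar X / g X))) :
    (∀ ft : (Fin n → Fin d → ℝ) → ℝ, (∀ X, 0 ≤ ft X) →
        (∀ X, (∑ π : Equiv.Perm (Fin n), ft (X ∘ π)) =
          ∑ π : Equiv.Perm (Fin n), f (X ∘ π)) →
        Integrable (fun X : Fin n → Fin d → ℝ =>
          ft X * Real.log (ft X / g X)) →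
        (∫ X : Fin n → Fin d → ℝ, fstar X * Real.log (fstar X / g X)) ≤
          ∫ X : Fin n → Fin d → ℝ, ft X * Real.log (ft X / g X))
    ∧ (∫ X : Fin n → Fin d → ℝ, fstar X * Real.log (fstar X / g X)) =
        (n.factorial : ℝ)⁻¹ *
          ∫ X : Fin n → Fin d → ℝ,
            (∑ π : Equiv.Perm (Fin n), f (X ∘ π)) *
              Real.log ((∑ π : Equiv.Perm (Fin n), f (X ∘ π)) /
                (∑ π : Equiv.Perm (Fin n), g (X ∘ π))) := by
  obtain rfl : fstar = iProjection f g := funext hfstar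
  have hfac : (0 : ℝ) < n.factorial := mod_cast n.factorial_pos
  have hmin : ∫ X, symmetrize f X * Real.log (symmetrize f X / symmetrize g X) =
      n.factorial * ∫ X, iProjection f g X * Real.log (iProjection f g X / g X) := by
    have h := integral_symmetrize volume hstar_int
    simp only [symmetrize_mul_log_iProjection hg, Fintype.card_fin] at h
    exact h
  refine ⟨fun ft hft0 hftsym hft_int => ?_, (eq_inv_mul_iff_mul_eq₀ hfac.ne').2 hmin.symm⟩
  have hsymm := integral_mono (integrable_symmetrize volume hstar_int)
    (integrable_symmetrize volume hft_int) fun X => by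
      have hX : symmetrize ft X = symmetrize f X := hftsym X
      rw [symmetrize_mul_log_iProjection hg, ← hX]
      exact mul_log_symmetrize_le hft0 hg X
  rw [integral_symmetrize volume hstar_int, integral_symmetrize volume hft_int,
    Fintype.card_fin] at hsymm
  exact le_of_mul_le_mul_left hsymm hfac

/-- KLSJPDA inner minimisation: over all densities `f̃` with the same
symmetrisation as `f`, the KL divergence to `g` is minimised by
`f̃⋆(X) = [g(X)/∑_π g(πX)] ∑_π f(πX)`, and the minimum value equals
`(1/n!) ∫ [∑_π f(πX)] log(∑_π f(πX)/∑_π g(πX)) dX`. -/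
theorem klsjpda_inner_minimization {d n : ℕ}
    (f g : (Fin n → Fin d → ℝ) → ℝ)
    (hf0 : ∀ X, 0 ≤ f X) (hf1 : ∫ X : Fin n → Fin d → ℝ, f X = 1)
    (hg : ∀ X, 0 < g X) (hg1 : ∫ X : Fin n → Fin d → ℝ, g X = 1)
    (fstar : (Fin n → Fin d → ℝ) → ℝ)
    (hfstar : ∀ X, fstar X =
      (g X / ∑ π : Equiv.Perm (Fin n), g (X ∘ π)) *
        ∑ π : Equiv.Perm (Fin n), f (X ∘ π))
    (hstar_int : Integrable (fun X : Fin n → Fin d → ℝ =>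
      fstar X * Real.log (fstar X / g X)))
    (hsym_int : Integrable (fun X : Fin n → Fin d → ℝ =>
      (∑ π : Equiv.Perm (Fin n), f (X ∘ π)) *
        Real.log ((∑ π : Equiv.Perm (Fin n), f (X ∘ π)) /
          (∑ π : Equiv.Perm (Fin n), g (X ∘ π))))) :
    (∀ ft : (Fin n → Fin d → ℝ) → ℝ, (∀ X, 0 ≤ ft X) →
        (∀ X, (∑ π : Equiv.Perm (Fin n), ft (X ∘ π)) =
          ∑ π : Equiv.Perm (Fin n), f (X ∘ π)) →
        Integrable (fun X : Fin n → Fin d → ℝ =>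
          ft X * Real.log (ft X / g X)) →
        (∫ X : Fin n → Fin d → ℝ, fstar X * Real.log (fstar X / g X)) ≤
          ∫ X : Fin n → Fin d → ℝ, ft X * Real.log (ft X / g X))
    ∧ (∫ X : Fin n → Fin d → ℝ, fstar X * Real.log (fstar X / g X)) =
        (n.factorial : ℝ)⁻¹ *
          ∫ X : Fin n → Fin d → ℝ,
            (∑ π : Equiv.Perm (Fin n), f (X ∘ π)) *
              Real.log ((∑ π : Equiv.Perm (Fin n), f (X ∘ π)) /
                (∑ π : Equiv.Perm (Fin n), g (X ∘ π))) :=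
  klsjpda_inner_minimization_general f g hg fstar hfstar hstar_int
end
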